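/- arXiv:2505.14177 — 5 statements merged into one kernel-verified Lean document; each statement's English description precedes it below -/
import Mathlib

section
/- Let d ≥ 1, let ρ > 0 and γ > 0 satisfy γρ < 1, and let g : ℝ^d → ℝ be ρ-weakly convex. Then the proximal operator Prox_{γg} : ℝ^d → ℝ^d is Lipschitz continuous with Lipschitz constant 1/(1 − γρ); that is, ‖Prox_{γg}(x) − Prox_{γg}(x′)‖ ≤ (1/(1 − γρ))‖x − x′‖ for all x, x′ ∈ ℝ^d. -/
/-!
For a `ρ`-weakly convex `g`, the objective `y ↦ ‖x - y‖² / (2γ) + g y` is `(γ⁻¹ - ρ)`-strongly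
convex, so it grows quadratically away from its minimizer `prox x`. Adding this growth inequality
for `x` at `prox x'` to the one for `x'` at `prox x`, the values of `g` cancel and what remains is
the strong monotonicity `(1 - γρ) ‖prox x - prox x'‖² ≤ ⟪x - x', prox x - prox x'⟫`;
Cauchy–Schwarz then gives the Lipschitz bound.
-/

open Filter Set Topology
open scoped RealInnerProductSpace

theorem StrongConvexOn.add_sq_norm_sub_le_of_isMinOn {E : Type*} [NormedAddCommGroup E]
    [NormedSpace ℝ E] {s : Set E} {m : ℝ} {f : E → ℝ} {p y : E} (hf : StrongConvexOn s m f)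
    (hmin : IsMinOn f s p) (hp : p ∈ s) (hy : y ∈ s) :
    f p + m / 2 * ‖y - p‖ ^ 2 ≤ f y := by
  have along_segment : ∀ t ∈ Ioo (0 : ℝ) 1, f p + (1 - t) * (m / 2 * ‖y - p‖ ^ 2) ≤ f y := by
    rintro t ⟨ht0, ht1⟩
    have hmin_t := isMinOn_iff.1 hmin _ (hf.1 hp hy (by linarith) ht0.le (sub_add_cancel 1 t))
    have hconv := hf.2 hp hy (by linarith) ht0.le (sub_add_cancel 1 t)
    rw [smul_eq_mul, smul_eq_mul, norm_sub_rev p y] at hconv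
    refine le_of_mul_le_mul_left ?_ ht0
    linear_combination hmin_t + hconv
  have hlim : Tendsto (fun t : ℝ => f p + (1 - t) * (m / 2 * ‖y - p‖ ^ 2)) (𝓝[>] 0)
      (𝓝 (f p + m / 2 * ‖y - p‖ ^ 2)) := by
    have : Continuous (fun t : ℝ => f p + (1 - t) * (m / 2 * ‖y - p‖ ^ 2)) := by fun_prop
    simpa using (this.tendsto 0).mono_left nhdsWithin_le_nhds
  exact le_of_tendsto hlim (eventually_of_mem (Ioo_mem_nhdsGT one_pos) along_segment)

theorem ConvexOn.strongConvexOn_sq_norm_sub_add {E : Type*} [NormedAddCommGroup E]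
    [InnerProductSpace ℝ E] {s : Set E} {g : E → ℝ} {ρ : ℝ}
    (hg : ConvexOn ℝ s fun y => g y + ρ / 2 * ‖y‖ ^ 2) (γ : ℝ) (x : E) :
    StrongConvexOn s (γ⁻¹ - ρ) fun y => 1 / (2 * γ) * ‖x - y‖ ^ 2 + g y := by
  rw [strongConvexOn_iff_convex]
  have hlin : ConvexOn ℝ s (-γ⁻¹ • innerₛₗ ℝ x) := LinearMap.convexOn _ hg.1
  refine ((hg.add hlin).add_const (1 / (2 * γ) * ‖x‖ ^ 2)).congr fun y _ => ?_
  simp only [Pi.add_apply, LinearMap.smul_apply, innerₛₗ_apply_apply, smul_eq_mul,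
    norm_sub_sq_real]
  ring

theorem one_sub_mul_sq_norm_sub_le_inner_of_isMinOn {E : Type*} [NormedAddCommGroup E]
    [InnerProductSpace ℝ E] {g : E → ℝ} {ρ γ : ℝ} (hγ : 0 < γ)
    (hg : ConvexOn ℝ univ fun y => g y + ρ / 2 * ‖y‖ ^ 2) {x x' p p' : E}
    (hp : IsMinOn (fun y => 1 / (2 * γ) * ‖x - y‖ ^ 2 + g y) univ p)
    (hp' : IsMinOn (fun y => 1 / (2 * γ) * ‖x' - y‖ ^ 2 + g y) univ p') :
    (1 - γ * ρ) * ‖p - p'‖ ^ 2 ≤ ⟪x - x', p - p'⟫ := by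
  have growth := (hg.strongConvexOn_sq_norm_sub_add γ x).add_sq_norm_sub_le_of_isMinOn hp
    (mem_univ p) (mem_univ p')
  have growth' := (hg.strongConvexOn_sq_norm_sub_add γ x').add_sq_norm_sub_le_of_isMinOn hp'
    (mem_univ p') (mem_univ p)
  have expand_squares : ‖x - p'‖ ^ 2 - ‖x - p‖ ^ 2 + ‖x' - p‖ ^ 2 - ‖x' - p'‖ ^ 2
      = 2 * ⟪x - x', p - p'⟫ := by
    simp only [← real_inner_self_eq_norm_sq, inner_sub_left, inner_sub_right, real_inner_comm]
    ring
  rw [norm_sub_rev p' p] at growth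
  have key : (γ⁻¹ - ρ) * ‖p - p'‖ ^ 2 ≤ γ⁻¹ * ⟪x - x', p - p'⟫ := by
    linear_combination growth + growth' + 1 / (2 * γ) * expand_squares
  calc (1 - γ * ρ) * ‖p - p'‖ ^ 2 = γ * ((γ⁻¹ - ρ) * ‖p - p'‖ ^ 2) := by
        field_simp
    _ ≤ γ * (γ⁻¹ * ⟪x - x', p - p'⟫) := by gcongr
    _ = ⟪x - x', p - p'⟫ := by field_simp

theorem mul_norm_le_norm_of_mul_sq_norm_le_inner {E : Type*} [NormedAddCommGroup E]
    [InnerProductSpace ℝ E] {c : ℝ} {u v : E} (h : c * ‖u‖ ^ 2 ≤ ⟪v, u⟫) : c * ‖u‖ ≤ ‖v‖ := by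
  rcases (norm_nonneg u).eq_or_lt with hu | hu
  · simp [← hu]
  · refine le_of_mul_le_mul_right ?_ hu
    linarith [real_inner_le_norm v u]

theorem prox_lipschitz_general (d : ℕ) (ρ γ : ℝ)
    (hγ : 0 < γ) (hγρ : γ * ρ < 1)
    (g : EuclideanSpace ℝ (Fin d) → ℝ)
    (hweak : ConvexOn ℝ Set.univ (fun x => g x + ρ / 2 * ‖x‖ ^ 2))
    (prox : EuclideanSpace ℝ (Fin d) → EuclideanSpace ℝ (Fin d))
    (hprox : ∀ x y : EuclideanSpace ℝ (Fin d),
      1 / (2 * γ) * ‖x - prox x‖ ^ 2 + g (prox x)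
        ≤ 1 / (2 * γ) * ‖x - y‖ ^ 2 + g y) :
    ∀ x x' : EuclideanSpace ℝ (Fin d),
      ‖prox x - prox x'‖ ≤ 1 / (1 - γ * ρ) * ‖x - x'‖ := by
  intro x x'
  have hκ : 0 < 1 - γ * ρ := by linarith
  rw [one_div, inv_mul_eq_div, le_div_iff₀ hκ, mul_comm]
  exact mul_norm_le_norm_of_mul_sq_norm_le_inner <|
    one_sub_mul_sq_norm_sub_le_inner_of_isMinOn hγ hweak
      (isMinOn_univ_iff.2 (hprox x)) (isMinOn_univ_iff.2 (hprox x'))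

/-- For `g` ρ-weakly convex with `γρ < 1`, the proximal operator is
Lipschitz with constant `1/(1 − γρ)`. -/
theorem prox_lipschitz (d : ℕ) (hd : 1 ≤ d) (ρ γ : ℝ)
    (hρ : 0 < ρ) (hγ : 0 < γ) (hγρ : γ * ρ < 1)
    (g : EuclideanSpace ℝ (Fin d) → ℝ)
    (hweak : ConvexOn ℝ Set.univ (fun x => g x + ρ / 2 * ‖x‖ ^ 2))
    (prox : EuclideanSpace ℝ (Fin d) → EuclideanSpace ℝ (Fin d))
    (hprox : ∀ x y : EuclideanSpace ℝ (Fin d),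
      1 / (2 * γ) * ‖x - prox x‖ ^ 2 + g (prox x)
        ≤ 1 / (2 * γ) * ‖x - y‖ ^ 2 + g y) :
    ∀ x x' : EuclideanSpace ℝ (Fin d),
      ‖prox x - prox x'‖ ≤ 1 / (1 - γ * ρ) * ‖x - x'‖ :=
  prox_lipschitz_general d ρ γ hγ hγρ g hweak prox hprox
end

section
/- Let d ≥ 1, let ρ > 0 and γ > 0 satisfy γρ < 1, and let g : ℝ^d → ℝ be ρ-weakly convex (in particular g is finite everywhere). Then the complement of the image of the proximal operator is Lebesgue-negligible: the Lebesgue measure of ℝ^d ∖ Prox_{γg}(ℝ^d) is zero. In particular the Lebesgue measure of Conv(Prox_{γg}(ℝ^d)) ∖ Prox_{γg}(ℝ^d) is zero, where Conv denotes the convex hull. -/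
/-!
The proximal map is onto, so both sets are empty. Weak convexity gives at every `y` a vector `v`
with `g ≥ g y + ⟪v, · - y⟫ - ρ/2 ‖· - y‖²`: a subgradient of `g + ρ/2 ‖·‖²`, found by separating
`(y, g y + ρ/2 ‖y‖²)` from the open strict epigraph. Since `γρ < 1`, this quadratic minorant
forces `y` to be the only minimiser of the proximal objective at `y + γ v`.
-/

open Set
open scoped RealInnerProductSpace Topology

section Subgradient

variable {E : Type*} [TopologicalSpace E] [AddCommGroup E] [Module ℝ E]
  [IsTopologicalAddGroup E] [ContinuousSMul ℝ E]

theorem ConvexOn.exists_subgradient {f : E → ℝ} (hf : ConvexOn ℝ univ f) (hcont : Continuous f)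
    (y : E) : ∃ φ : StrongDual ℝ E, ∀ z, f y + φ (z - y) ≤ f z := by
  have hS_open : IsOpen {p : E × ℝ | p.1 ∈ univ ∧ f p.1 < p.2} := by
    simpa using isOpen_lt (hcont.comp continuous_fst) continuous_snd
  obtain ⟨L, hL⟩ := geometric_hahn_banach_open_point hf.convex_strict_epigraph hS_open
    (x := (y, f y)) (by simp)
  set ℓ := L.comp (.inl ℝ E ℝ)
  set c := L (0, 1)
  have hL_apply (z : E) (t : ℝ) : L (z, t) = ℓ z + t * c := by
    have : (z, t) = (z, 0) + t • ((0 : E), (1 : ℝ)) := by simp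
    rw [this, map_add, map_smul, smul_eq_mul]
    rfl
  have hlt (z : E) (t : ℝ) (ht : f z < t) : ℓ z + t * c < ℓ y + f y * c := by
    simpa only [hL_apply] using hL (z, t) ⟨mem_univ z, ht⟩
  have hc : c < 0 := by linarith [hlt y (f y + 1) (by linarith)]
  have hle (z : E) : ℓ z + f z * c ≤ ℓ y + f y * c :=
    le_of_tendsto (x := 𝓝[>] (f z))
      ((continuous_const.add (continuous_id.mul continuous_const)).tendsto (f z)
        |>.mono_left nhdsWithin_le_nhds)
      (eventually_nhdsWithin_of_forall fun t ht => (hlt z t ht).le)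
  refine ⟨(-c)⁻¹ • ℓ, fun z => ?_⟩
  have : (-c)⁻¹ * (ℓ z - ℓ y) ≤ f z - f y := by
    rw [inv_mul_le_iff₀ (neg_pos.2 hc)]
    linarith [hle z]
  rw [smul_apply, map_sub, smul_eq_mul]
  linarith

end Subgradient

section Prox

variable {E : Type*} [NormedAddCommGroup E] [InnerProductSpace ℝ E] {g : E → ℝ} {ρ γ : ℝ}

noncomputable def proxObjective (g : E → ℝ) (γ : ℝ) (x y : E) : ℝ :=
  1 / (2 * γ) * ‖x - y‖ ^ 2 + g y

theorem exists_quadratic_minorant_of_convexOn_add_sq [CompleteSpace E]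
    (hconv : ConvexOn ℝ univ fun x => g x + ρ / 2 * ‖x‖ ^ 2)
    (hcont : Continuous fun x => g x + ρ / 2 * ‖x‖ ^ 2) (y : E) :
    ∃ v : E, ∀ z, g y + ⟪v, z - y⟫ - ρ / 2 * ‖z - y‖ ^ 2 ≤ g z := by
  obtain ⟨φ, hφ⟩ := hconv.exists_subgradient hcont y
  set w := (InnerProductSpace.toDual ℝ E).symm φ
  refine ⟨w - ρ • y, fun z => ?_⟩
  have hw : g y + ρ / 2 * ‖y‖ ^ 2 + ⟪w, z - y⟫ ≤ g z + ρ / 2 * ‖z‖ ^ 2 := by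
    simpa only [w, InnerProductSpace.toDual_symm_apply] using hφ z
  have hz : ‖z‖ ^ 2 = ‖y‖ ^ 2 + 2 * ⟪y, z - y⟫ + ‖z - y‖ ^ 2 := by
    simpa using norm_add_sq_real y (z - y)
  rw [hz] at hw
  rw [inner_sub_left, real_inner_smul_left]
  linarith

theorem eq_of_proxObjective_le (hγ : 0 < γ) (hγρ : γ * ρ < 1) {y v p : E}
    (hv : ∀ z, g y + ⟪v, z - y⟫ - ρ / 2 * ‖z - y‖ ^ 2 ≤ g z)
    (hp : proxObjective g γ (y + γ • v) p ≤ proxObjective g γ (y + γ • v) y) :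
    p = y := by
  unfold proxObjective at hp
  have hexp : ‖y + γ • v - p‖ ^ 2 = γ ^ 2 * ‖v‖ ^ 2 - 2 * γ * ⟪v, p - y⟫ + ‖p - y‖ ^ 2 := by
    rw [show y + γ • v - p = γ • v - (p - y) by abel, norm_sub_sq_real, norm_smul,
      real_inner_smul_left, Real.norm_eq_abs, abs_of_pos hγ]
    ring
  rw [hexp, add_sub_cancel_left, norm_smul, Real.norm_eq_abs, abs_of_pos hγ] at hp
  have hcoef : (1 - γ * ρ) * ‖p - y‖ ^ 2 ≤ 0 := by
    field_simp at hp
    linarith [mul_le_mul_of_nonneg_left (hv p) hγ.le]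
  have : ‖p - y‖ ^ 2 = 0 :=
    le_antisymm (nonpos_of_mul_nonpos_right hcoef (by linarith)) (by positivity)
  simpa [sub_eq_zero] using this

theorem surjective_prox_of_convexOn_add_sq [CompleteSpace E] (hγ : 0 < γ)
    (hγρ : γ * ρ < 1) (hconv : ConvexOn ℝ univ fun x => g x + ρ / 2 * ‖x‖ ^ 2)
    (hcont : Continuous fun x => g x + ρ / 2 * ‖x‖ ^ 2) {prox : E → E}
    (hprox : ∀ x y, proxObjective g γ x (prox x) ≤ proxObjective g γ x y) :
    Function.Surjective prox := fun y => by
  obtain ⟨v, hv⟩ := exists_quadratic_minorant_of_convexOn_add_sq hconv hcont y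
  exact ⟨y + γ • v, eq_of_proxObjective_le hγ hγρ hv (hprox _ y)⟩

end Prox

theorem prox_image_almost_all_general (d : ℕ) (ρ γ : ℝ)
    (hγ : 0 < γ) (hγρ : γ * ρ < 1)
    (g : EuclideanSpace ℝ (Fin d) → ℝ)
    (hweak : ConvexOn ℝ Set.univ (fun x => g x + ρ / 2 * ‖x‖ ^ 2))
    (prox : EuclideanSpace ℝ (Fin d) → EuclideanSpace ℝ (Fin d))
    (hprox : ∀ x y : EuclideanSpace ℝ (Fin d),
      1 / (2 * γ) * ‖x - prox x‖ ^ 2 + g (prox x)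
        ≤ 1 / (2 * γ) * ‖x - y‖ ^ 2 + g y) :
    MeasureTheory.volume (Set.range prox)ᶜ = 0 ∧
    MeasureTheory.volume (convexHull ℝ (Set.range prox) \ Set.range prox) = 0 := by
  have hcont : Continuous fun x => g x + ρ / 2 * ‖x‖ ^ 2 :=
    continuousOn_univ.1 (hweak.continuousOn isOpen_univ)
  have hsurj := surjective_prox_of_convexOn_add_sq hγ hγρ hweak hcont hprox
  simp [hsurj.range_eq, convexHull_univ]

/-- For `g : ℝ^d → ℝ` ρ-weakly convex (finite everywhere) with `γρ < 1`,
the complement of the image of the proximal operator is Lebesgue-null; in particular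
the convex hull of the image minus the image is Lebesgue-null. -/
theorem prox_image_almost_all (d : ℕ) (hd : 1 ≤ d) (ρ γ : ℝ)
    (hρ : 0 < ρ) (hγ : 0 < γ) (hγρ : γ * ρ < 1)
    (g : EuclideanSpace ℝ (Fin d) → ℝ)
    (hweak : ConvexOn ℝ Set.univ (fun x => g x + ρ / 2 * ‖x‖ ^ 2))
    (prox : EuclideanSpace ℝ (Fin d) → EuclideanSpace ℝ (Fin d))
    (hprox : ∀ x y : EuclideanSpace ℝ (Fin d),
      1 / (2 * γ) * ‖x - prox x‖ ^ 2 + g (prox x)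
        ≤ 1 / (2 * γ) * ‖x - y‖ ^ 2 + g y) :
    MeasureTheory.volume (Set.range prox)ᶜ = 0 ∧
    MeasureTheory.volume (convexHull ℝ (Set.range prox) \ Set.range prox) = 0 :=
  prox_image_almost_all_general d ρ γ hγ hγρ g hweak prox hprox
end

section
/- Let d ≥ 1, let ρ > 0 and γ > 0 satisfy γρ < 1, and let g : ℝ^d → ℝ be ρ-weakly convex. Then the Moreau envelope g^γ is ρ/(1 − γρ)-weakly convex, i.e., x ↦ g^γ(x) + (ρ/(2(1 − γρ)))‖x‖² is convex. -/
/-!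
Write `s = 1 - γρ` and `h = g + (ρ/2)‖·‖²`. Completing the square in
`‖x - y‖²/(2γ) - (ρ/2)‖y‖²` gives `g^γ(x) + ρ/(2s)‖x‖² = h^(γ/s)(s⁻¹x)`, so it suffices that the
Moreau envelope of the convex function `h` is convex. It is the partial infimum over `y` of the
jointly convex function `(x, y) ↦ ‖x - y‖²/(2γ) + h y`, and this infimum is finite because in
finite dimension `h` is bounded above on the unit ball, hence bounded below by `h 0 - K‖y‖`.
-/

open Set

noncomputable def moreauEnvelope {E : Type*} [NormedAddCommGroup E] (γ : ℝ) (g : E → ℝ)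
    (x : E) : ℝ :=
  ⨅ y, 1 / (2 * γ) * ‖x - y‖ ^ 2 + g y

theorem ConvexOn.ciInf_of_uncurry {E F : Type*} [AddCommGroup E] [Module ℝ E]
    [AddCommGroup F] [Module ℝ F] {Φ : E → F → ℝ}
    (hΦ : ConvexOn ℝ univ (Function.uncurry Φ)) (hbdd : ∀ x, BddBelow (range (Φ x))) :
    ConvexOn ℝ univ (fun x => ⨅ y, Φ x y) := by
  refine ⟨convex_univ, fun x _ x' _ a b ha hb hab => le_of_forall_pos_le_add fun ε hε => ?_⟩
  obtain ⟨y, hy⟩ : ∃ y, Φ x y < (⨅ y, Φ x y) + ε := exists_lt_of_ciInf_lt (by linarith)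
  obtain ⟨y', hy'⟩ : ∃ y', Φ x' y' < (⨅ y, Φ x' y) + ε := exists_lt_of_ciInf_lt (by linarith)
  calc (⨅ z, Φ (a • x + b • x') z) ≤ Φ (a • x + b • x') (a • y + b • y') := ciInf_le (hbdd _) _
    _ ≤ a * Φ x y + b * Φ x' y' := hΦ.2 (mem_univ (x, y)) (mem_univ (x', y')) ha hb hab
    _ ≤ a * ((⨅ y, Φ x y) + ε) + b * ((⨅ y, Φ x' y) + ε) := by gcongr
    _ = a * (⨅ y, Φ x y) + b * (⨅ y, Φ x' y) + ε := by linear_combination ε * hab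

section NormedSpace

variable {E : Type*} [NormedAddCommGroup E] [NormedSpace ℝ E]

theorem ConvexOn.mul_norm_sub_sq_add {f : E → ℝ} (hf : ConvexOn ℝ univ f) {c : ℝ} (hc : 0 ≤ c) :
    ConvexOn ℝ univ (fun p : E × E => c * ‖p.1 - p.2‖ ^ 2 + f p.2) := by
  have hsq : ConvexOn ℝ univ (fun p : E × E => ‖p.1 - p.2‖ ^ 2) :=
    (convexOn_univ_norm.pow (fun _ _ => norm_nonneg _) 2).comp_linearMap
      (LinearMap.fst ℝ E E - LinearMap.snd ℝ E E)
  exact (hsq.smul hc).add (hf.comp_linearMap (LinearMap.snd ℝ E E))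

variable [FiniteDimensional ℝ E]

theorem ConvexOn.exists_sub_mul_norm_le {f : E → ℝ} (hf : ConvexOn ℝ univ f) :
    ∃ K, 0 ≤ K ∧ ∀ y, f 0 - K * ‖y‖ ≤ f y := by
  obtain ⟨M, hM⟩ := (isCompact_closedBall (0 : E) 1).bddAbove_image
    hf.locallyLipschitz.continuous.continuousOn
  have hM' : ∀ z, ‖z‖ ≤ 1 → f z ≤ M := fun z hz => hM ⟨z, by simpa using hz, rfl⟩
  refine ⟨M - f 0, by linarith [hM' 0 (by simp)], fun y => ?_⟩
  rcases eq_or_ne y 0 with rfl | hy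
  · simp
  set n := ‖y‖
  have hn : 0 < n := norm_pos_iff.mpr hy
  -- `0` is the convex combination of `y` and the unit vector `-y/‖y‖` with weights `1 : ‖y‖`.
  have hzero : (1 + n)⁻¹ • y + (n / (1 + n)) • (-n⁻¹ • y) = 0 := by
    rw [smul_smul, ← add_smul]
    field_simp
    simp
  have hconv : f ((1 + n)⁻¹ • y + (n / (1 + n)) • (-n⁻¹ • y))
      ≤ (1 + n)⁻¹ • f y + (n / (1 + n)) • f (-n⁻¹ • y) :=
    hf.2 (mem_univ _) (mem_univ _) (by positivity) (by positivity) (by field_simp)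
  rw [hzero, smul_eq_mul, smul_eq_mul] at hconv
  have hunit : f (-n⁻¹ • y) ≤ M := hM' _ (by rw [norm_smul]; simp [n, hn.ne'])
  have hscaled : (1 + n) * f 0 ≤ f y + n * f (-n⁻¹ • y) :=
    calc (1 + n) * f 0 ≤ (1 + n) * ((1 + n)⁻¹ * f y + n / (1 + n) * f (-n⁻¹ • y)) := by gcongr
      _ = f y + n * f (-n⁻¹ • y) := by field_simp
  nlinarith [mul_le_mul_of_nonneg_left hunit hn.le]

theorem ConvexOn.bddBelow_range_add_mul_norm_sub_sq {f : E → ℝ} (hf : ConvexOn ℝ univ f)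
    {c : ℝ} (hc : 0 < c) (x : E) : BddBelow (range fun y => c * ‖x - y‖ ^ 2 + f y) := by
  obtain ⟨K, hK, hfK⟩ := hf.exists_sub_mul_norm_le
  refine ⟨f 0 - K * ‖x‖ - K ^ 2 / (4 * c), ?_⟩
  rintro _ ⟨y, rfl⟩
  have htri : ‖y‖ ≤ ‖x‖ + ‖x - y‖ := by simpa using norm_sub_le x (x - y)
  have hquad : K * ‖x - y‖ ≤ c * ‖x - y‖ ^ 2 + K ^ 2 / (4 * c) := by
    rw [← sub_nonneg]
    have hsquare : c * ‖x - y‖ ^ 2 + K ^ 2 / (4 * c) - K * ‖x - y‖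
        = (2 * c * ‖x - y‖ - K) ^ 2 / (4 * c) := by
      field_simp
      ring
    rw [hsquare]
    positivity
  nlinarith [hfK y, mul_le_mul_of_nonneg_left htri hK]

theorem convexOn_moreauEnvelope {f : E → ℝ} (hf : ConvexOn ℝ univ f) {γ : ℝ} (hγ : 0 < γ) :
    ConvexOn ℝ univ (moreauEnvelope γ f) :=
  ConvexOn.ciInf_of_uncurry (hf.mul_norm_sub_sq_add (by positivity))
    (hf.bddBelow_range_add_mul_norm_sub_sq (by positivity))

end NormedSpace

section InnerProductSpace

variable {E : Type*} [NormedAddCommGroup E] [InnerProductSpace ℝ E]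

theorem one_div_two_mul_norm_sub_sq_add_eq {γ ρ : ℝ} (hγ : γ ≠ 0) (hs : 1 - γ * ρ ≠ 0)
    (x y : E) :
    1 / (2 * γ) * ‖x - y‖ ^ 2 + ρ / (2 * (1 - γ * ρ)) * ‖x‖ ^ 2
      = 1 / (2 * (γ / (1 - γ * ρ))) * ‖(1 - γ * ρ)⁻¹ • x - y‖ ^ 2 + ρ / 2 * ‖y‖ ^ 2 := by
  rw [norm_sub_sq_real, norm_sub_sq_real, norm_smul, real_inner_smul_left, Real.norm_eq_abs,
    mul_pow, sq_abs]
  field_simp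
  ring

theorem moreauEnvelope_add_sq_eq {γ ρ : ℝ} (hγ : γ ≠ 0) (hs : 1 - γ * ρ ≠ 0) {g : E → ℝ}
    {x : E} (hbdd : BddBelow (range fun y => 1 / (2 * (γ / (1 - γ * ρ))) *
      ‖(1 - γ * ρ)⁻¹ • x - y‖ ^ 2 + (g y + ρ / 2 * ‖y‖ ^ 2))) :
    moreauEnvelope γ g x + ρ / (2 * (1 - γ * ρ)) * ‖x‖ ^ 2
      = moreauEnvelope (γ / (1 - γ * ρ)) (fun y => g y + ρ / 2 * ‖y‖ ^ 2) ((1 - γ * ρ)⁻¹ • x) := by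
  have hshift := (OrderIso.addRight (-(ρ / (2 * (1 - γ * ρ)) * ‖x‖ ^ 2))).map_ciInf hbdd
  simp only [OrderIso.addRight_apply, ← sub_eq_add_neg] at hshift
  have hpoint : (fun y => 1 / (2 * γ) * ‖x - y‖ ^ 2 + g y) = fun y =>
      1 / (2 * (γ / (1 - γ * ρ))) * ‖(1 - γ * ρ)⁻¹ • x - y‖ ^ 2 + (g y + ρ / 2 * ‖y‖ ^ 2)
        - ρ / (2 * (1 - γ * ρ)) * ‖x‖ ^ 2 := by
    ext y
    linarith [one_div_two_mul_norm_sub_sq_add_eq hγ hs x y]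
  rw [moreauEnvelope, moreauEnvelope, hpoint, ← hshift, sub_add_cancel]

theorem convexOn_moreauEnvelope_add_sq [FiniteDimensional ℝ E] {g : E → ℝ} {ρ γ : ℝ}
    (hγ : 0 < γ) (hγρ : γ * ρ < 1)
    (hweak : ConvexOn ℝ univ (fun x => g x + ρ / 2 * ‖x‖ ^ 2)) :
    ConvexOn ℝ univ (fun x => moreauEnvelope γ g x + ρ / (2 * (1 - γ * ρ)) * ‖x‖ ^ 2) := by
  have hs : 0 < 1 - γ * ρ := by linarith
  have hscaled := (convexOn_moreauEnvelope hweak (div_pos hγ hs)).comp_linearMap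
    ((1 - γ * ρ)⁻¹ • LinearMap.id)
  refine hscaled.congr fun x _ => (moreauEnvelope_add_sq_eq hγ.ne' hs.ne' ?_).symm
  exact hweak.bddBelow_range_add_mul_norm_sub_sq (by positivity) _

end InnerProductSpace

theorem moreau_envelope_weakly_convex_general (d : ℕ) (ρ γ : ℝ)
    (hγ : 0 < γ) (hγρ : γ * ρ < 1)
    (g : EuclideanSpace ℝ (Fin d) → ℝ)
    (hweak : ConvexOn ℝ Set.univ (fun x => g x + ρ / 2 * ‖x‖ ^ 2)) :
    ConvexOn ℝ Set.univ
      (fun x : EuclideanSpace ℝ (Fin d) =>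
        (⨅ y : EuclideanSpace ℝ (Fin d), 1 / (2 * γ) * ‖x - y‖ ^ 2 + g y)
          + ρ / (2 * (1 - γ * ρ)) * ‖x‖ ^ 2) :=
  convexOn_moreauEnvelope_add_sq hγ hγρ hweak

/-- For `g` ρ-weakly convex with `γρ < 1`, the Moreau envelope `g^γ`
is `ρ/(1 − γρ)`-weakly convex. -/
theorem moreau_envelope_weakly_convex (d : ℕ) (hd : 1 ≤ d) (ρ γ : ℝ)
    (hρ : 0 < ρ) (hγ : 0 < γ) (hγρ : γ * ρ < 1)
    (g : EuclideanSpace ℝ (Fin d) → ℝ)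
    (hweak : ConvexOn ℝ Set.univ (fun x => g x + ρ / 2 * ‖x‖ ^ 2)) :
    ConvexOn ℝ Set.univ
      (fun x : EuclideanSpace ℝ (Fin d) =>
        (⨅ y : EuclideanSpace ℝ (Fin d), 1 / (2 * γ) * ‖x - y‖ ^ 2 + g y)
          + ρ / (2 * (1 - γ * ρ)) * ‖x‖ ^ 2) :=
  moreau_envelope_weakly_convex_general d ρ γ hγ hγρ g hweak
end

section
/- Let d ≥ 1, let ρ > 0 and γ > 0 satisfy γρ < 1, and let g : ℝ^d → ℝ be ρ-weakly convex. Then the gradient of the Moreau envelope, ∇g^γ, is Lipschitz continuous on ℝ^d with Lipschitz constant max(1/γ, ρ/(1 − γρ)); moreover, for all x, y ∈ ℝ^d it satisfies the two-sided bound −(ρ/(1 − γρ))‖x − y‖² ≤ ⟨∇g^γ(x) − ∇g^γ(y), x − y⟩ ≤ (1/γ)‖x − y‖². -/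
open scoped RealInnerProductSpace

variable {E : Type*} [NormedAddCommGroup E] [InnerProductSpace ℝ E]

lemma combo_sq (u v : E) (t : ℝ) :
    ‖(1 - t) • u + t • v‖ ^ 2
      = (1 - t) * ‖u‖ ^ 2 + t * ‖v‖ ^ 2 - t * (1 - t) * ‖u - v‖ ^ 2 := by
  simp only [← real_inner_self_eq_norm_sq, inner_add_left, inner_add_right,
    inner_sub_left, inner_sub_right, real_inner_smul_left, real_inner_smul_right,
    real_inner_comm v u]
  ring

lemma combo_sq' (x u v : E) (t : ℝ) :
    ‖x - ((1 - t) • u + t • v)‖ ^ 2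
      = (1 - t) * ‖x - u‖ ^ 2 + t * ‖x - v‖ ^ 2 - t * (1 - t) * ‖u - v‖ ^ 2 := by
  have h : x - ((1 - t) • u + t • v) = (1 - t) • (x - u) + t • (x - v) := by
    simp [smul_sub, sub_smul]; abel
  rw [h, combo_sq]
  have h2 : (x - u) - (x - v) = v - u := by abel
  rw [h2, norm_sub_rev v u]

lemma id3 (x y u v : E) (γ : ℝ) (hγ : γ ≠ 0) :
    1 / (2*γ) * ‖x - v‖ ^ 2 - 1 / (2*γ) * ‖x - u‖ ^ 2
      + 1 / (2*γ) * ‖y - u‖ ^ 2 - 1 / (2*γ) * ‖y - v‖ ^ 2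
      = γ⁻¹ * ⟪x - y, u - v⟫ := by
  simp only [← real_inner_self_eq_norm_sq, inner_sub_left, inner_sub_right]
  field_simp
  ring_nf
  simp [real_inner_comm]
  ring_nf

lemma limit_aux {M I : ℝ} (hI0 : 0 ≤ I)
    (h : ∀ t : ℝ, 0 < t → t ≤ 1 → M * (1 - t) ≤ I) : M ≤ I := by
  by_contra h'
  push_neg at h'
  have hMpos : 0 < M := lt_of_le_of_lt hI0 h'
  have ht : 0 < (M - I)/(2*M) := div_pos (by linarith) (by linarith)
  have ht1 : (M - I)/(2*M) ≤ 1 := by rw [div_le_one (by linarith)]; linarith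
  have hs := h _ ht ht1
  have heq : M * (1 - (M - I)/(2*M)) = (M + I)/2 := by field_simp; ring
  rw [heq] at hs
  linarith

set_option maxHeartbeats 1000000 in
lemma key_mono (ρ γ : ℝ) (hρ : 0 < ρ) (hγ : 0 < γ) (hγρ : γ * ρ < 1)
    (g : E → ℝ) (hweak : ConvexOn ℝ Set.univ (fun x => g x + ρ / 2 * ‖x‖ ^ 2))
    (prox : E → E)
    (hprox : ∀ x y : E, 1 / (2 * γ) * ‖x - prox x‖ ^ 2 + g (prox x)
        ≤ 1 / (2 * γ) * ‖x - y‖ ^ 2 + g y) (x y : E) :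
    (1 - γ * ρ) * ‖prox x - prox y‖ ^ 2 ≤ ⟪x - y, prox x - prox y⟫ := by
  set u := prox x with hu
  set v := prox y with hv
  have step : ∀ t : ℝ, 0 < t → t ≤ 1 →
      ((1/(2*γ) - ρ/2) * 2 * ‖u - v‖ ^ 2) * (1 - t) ≤ γ⁻¹ * ⟪x - y, u - v⟫ := by
    intro t ht ht1
    have h01 : (0:ℝ) ≤ 1 - t := by linarith
    have hz1 := hweak.2 (Set.mem_univ u) (Set.mem_univ v) h01 ht.le (by ring)
    simp only [smul_eq_mul] at hz1
    have hp1 := hprox x ((1-t) • u + t • v)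
    rw [← hu, combo_sq' x u v t] at hp1
    rw [combo_sq u v t] at hz1
    have hfac1 : t * (1/(2*γ)*‖x-u‖^2 + g u) + (1/(2*γ) - ρ/2) * (t*(1-t)*‖u-v‖^2)
        ≤ t * (1/(2*γ)*‖x-v‖^2 + g v) := by nlinarith [hz1, hp1]
    have hx : (1/(2*γ) - ρ/2) * ((1-t) * ‖u-v‖^2)
        ≤ (1/(2*γ)*‖x-v‖^2 + g v) - (1/(2*γ)*‖x-u‖^2 + g u) := by
      nlinarith [hfac1, ht]
    have hz2 := hweak.2 (Set.mem_univ v) (Set.mem_univ u) h01 ht.le (by ring)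
    simp only [smul_eq_mul] at hz2
    have hp2 := hprox y ((1-t) • v + t • u)
    rw [← hv, combo_sq' y v u t] at hp2
    rw [combo_sq v u t] at hz2
    have hfac2 : t * (1/(2*γ)*‖y-v‖^2 + g v) + (1/(2*γ) - ρ/2) * (t*(1-t)*‖v-u‖^2)
        ≤ t * (1/(2*γ)*‖y-u‖^2 + g u) := by nlinarith [hz2, hp2]
    have hy : (1/(2*γ) - ρ/2) * ((1-t) * ‖v-u‖^2)
        ≤ (1/(2*γ)*‖y-u‖^2 + g u) - (1/(2*γ)*‖y-v‖^2 + g v) := by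
      nlinarith [hfac2, ht]
    rw [norm_sub_rev v u] at hy
    have hid := id3 x y u v γ hγ.ne'
    linarith
  have hI0 : 0 ≤ γ⁻¹ * ⟪x - y, u - v⟫ := by
    have := step 1 one_pos le_rfl
    simpa using this
  have hfin : (1/(2*γ) - ρ/2) * 2 * ‖u - v‖ ^ 2 ≤ γ⁻¹ * ⟪x - y, u - v⟫ :=
    limit_aux hI0 step
  have h1 : γ * ((1/(2*γ) - ρ/2) * 2 * ‖u - v‖^2) = (1 - γ*ρ) * ‖u - v‖^2 := by
    field_simp
  have h2 : γ * (γ⁻¹ * ⟪x - y, u - v⟫) = ⟪x - y, u - v⟫ := by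
    field_simp
  have := mul_le_mul_of_nonneg_left hfin hγ.le
  rw [h1, h2] at this
  exact this

set_option maxHeartbeats 1000000 in
/-- For `g` ρ-weakly convex with `γρ < 1`, the gradient of the Moreau
envelope, `∇g^γ(x) = (1/γ)(x − Prox_{γg}(x))`, is Lipschitz with constant
`max(1/γ, ρ/(1 − γρ))` and satisfies the two-sided bound
`−(ρ/(1−γρ))‖x−y‖² ≤ ⟨∇g^γ(x) − ∇g^γ(y), x − y⟩ ≤ (1/γ)‖x−y‖²`. -/
theorem moreau_envelope_gradient_lipschitz (d : ℕ) (hd : 1 ≤ d) (ρ γ : ℝ)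
    (hρ : 0 < ρ) (hγ : 0 < γ) (hγρ : γ * ρ < 1)
    (g : EuclideanSpace ℝ (Fin d) → ℝ)
    (hweak : ConvexOn ℝ Set.univ (fun x => g x + ρ / 2 * ‖x‖ ^ 2))
    (prox : EuclideanSpace ℝ (Fin d) → EuclideanSpace ℝ (Fin d))
    (hprox : ∀ x y : EuclideanSpace ℝ (Fin d),
      1 / (2 * γ) * ‖x - prox x‖ ^ 2 + g (prox x)
        ≤ 1 / (2 * γ) * ‖x - y‖ ^ 2 + g y) :
    (∀ x y : EuclideanSpace ℝ (Fin d),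
      ‖γ⁻¹ • (x - prox x) - γ⁻¹ • (y - prox y)‖
        ≤ max (1 / γ) (ρ / (1 - γ * ρ)) * ‖x - y‖) ∧
    (∀ x y : EuclideanSpace ℝ (Fin d),
      -(ρ / (1 - γ * ρ)) * ‖x - y‖ ^ 2
          ≤ ⟪γ⁻¹ • (x - prox x) - γ⁻¹ • (y - prox y), x - y⟫ ∧
      ⟪γ⁻¹ • (x - prox x) - γ⁻¹ • (y - prox y), x - y⟫
          ≤ 1 / γ * ‖x - y‖ ^ 2) := by
  have hβ : (0:ℝ) < 1 - γ * ρ := by linarith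
  have hγinv : (0:ℝ) < γ⁻¹ := inv_pos.2 hγ
  constructor
  · -- Lipschitz bound
    intro x y
    set u := prox x with hu
    set v := prox y with hv
    have hkey := key_mono ρ γ hρ hγ hγρ g hweak prox hprox x y
    rw [← hu, ← hv] at hkey
    have hcs : ⟪x - y, u - v⟫ ≤ ‖x - y‖ * ‖u - v‖ := real_inner_le_norm _ _
    have hnorm : (1 - γ*ρ) * ‖u - v‖ ≤ ‖x - y‖ := by
      nlinarith [hkey, hcs, norm_nonneg (u - v), norm_nonneg (x - y)]
    have hGvec : γ⁻¹ • (x - u) - γ⁻¹ • (y - v) = γ⁻¹ • ((x - y) - (u - v)) := by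
      rw [← smul_sub]; congr 1; abel
    have hGnorm : ‖γ⁻¹ • (x - u) - γ⁻¹ • (y - v)‖ = γ⁻¹ * ‖(x - y) - (u - v)‖ := by
      rw [hGvec, norm_smul, Real.norm_eq_abs, abs_of_pos hγinv]
    have hW : ‖(x - y) - (u - v)‖^2 = ‖x - y‖^2 - 2*⟪x - y, u - v⟫ + ‖u - v‖^2 :=
      norm_sub_sq_real _ _
    rw [hGnorm]
    rcases le_or_gt (γ * ρ) (1/2) with hc | hc
    · -- W ≤ ‖x-y‖, use 1/γ
      have hW2 : ‖(x - y) - (u - v)‖^2 ≤ ‖x - y‖^2 := by nlinarith [hW, hkey, sq_nonneg ‖u - v‖]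
      have hWle : ‖(x - y) - (u - v)‖ ≤ ‖x - y‖ := by
        nlinarith [hW2, norm_nonneg ((x - y) - (u - v)), norm_nonneg (x - y)]
      have h1 : γ⁻¹ * ‖(x - y) - (u - v)‖ ≤ (1/γ) * ‖x - y‖ := by
        rw [one_div]
        exact mul_le_mul_of_nonneg_left hWle hγinv.le
      exact h1.trans (mul_le_mul_of_nonneg_right (le_max_left _ _) (norm_nonneg _))
    · -- use ρ/(1-γρ)
      have hW2 : ‖(x - y) - (u - v)‖^2 ≤ ‖x - y‖^2 + (2*(γ*ρ) - 1) * ‖u - v‖^2 := by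
        nlinarith [hW, hkey]
      have h3 : (1 - γ*ρ)^2 * ‖u - v‖^2 ≤ ‖x - y‖^2 := by
        nlinarith [hnorm, hβ, norm_nonneg (u - v), norm_nonneg (x - y)]
      have h4 : ((1 - γ*ρ) * ‖(x - y) - (u - v)‖)^2 ≤ (γ*ρ*‖x - y‖)^2 := by
        nlinarith [hW2, h3, hβ, hc]
      have h5 : (1 - γ*ρ) * ‖(x - y) - (u - v)‖ ≤ γ*ρ*‖x - y‖ := by
        nlinarith [h4, mul_nonneg hβ.le (norm_nonneg ((x - y) - (u - v))),
          mul_nonneg (mul_nonneg hγ.le hρ.le) (norm_nonneg (x - y))]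
      have h6 : γ⁻¹ * ‖(x - y) - (u - v)‖ ≤ ρ/(1 - γ*ρ) * ‖x - y‖ := by
        rw [div_mul_eq_mul_div, le_div_iff₀ hβ]
        have h7 := mul_le_mul_of_nonneg_left h5 hγinv.le
        have h8 : γ⁻¹ * (γ*ρ*‖x - y‖) = ρ * ‖x - y‖ := by field_simp
        nlinarith [h7, h8]
      exact h6.trans (mul_le_mul_of_nonneg_right (le_max_right _ _) (norm_nonneg _))
  · -- two-sided inner product bound
    intro x y
    set u := prox x with hu
    set v := prox y with hv
    have hkey := key_mono ρ γ hρ hγ hγρ g hweak prox hprox x y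
    rw [← hu, ← hv] at hkey
    have hcs : ⟪x - y, u - v⟫ ≤ ‖x - y‖ * ‖u - v‖ := real_inner_le_norm _ _
    have hnorm : (1 - γ*ρ) * ‖u - v‖ ≤ ‖x - y‖ := by
      nlinarith [hkey, hcs, norm_nonneg (u - v), norm_nonneg (x - y)]
    have hGvec : γ⁻¹ • (x - u) - γ⁻¹ • (y - v) = γ⁻¹ • ((x - y) - (u - v)) := by
      rw [← smul_sub]; congr 1; abel
    have hGin : ⟪γ⁻¹ • (x - u) - γ⁻¹ • (y - v), x - y⟫
        = γ⁻¹ * (‖x - y‖^2 - ⟪x - y, u - v⟫) := by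
      rw [hGvec, real_inner_smul_left, inner_sub_left, real_inner_self_eq_norm_sq,
        real_inner_comm (u - v) (x - y)]
    rw [hGin]
    have hs0 : 0 ≤ ⟪x - y, u - v⟫ := le_trans (by positivity) hkey
    constructor
    · -- lower bound
      have hlow : (1 - γ*ρ) * ⟪x - y, u - v⟫ ≤ ‖x - y‖^2 := by
        nlinarith [hcs, hnorm, hβ, norm_nonneg (x - y), norm_nonneg (u - v)]
      rw [neg_mul, neg_le, div_mul_eq_mul_div, le_div_iff₀ hβ]
      have h7 := mul_le_mul_of_nonneg_left hlow hγinv.le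
      have h8 : γ⁻¹ * (γ*ρ*⟪x - y, u - v⟫) = ρ * ⟪x - y, u - v⟫ := by field_simp
      have h9 : γ⁻¹ * (γ*ρ*‖x - y‖^2) = ρ * ‖x - y‖^2 := by field_simp
      nlinarith [h7, h8, h9]
    · have h1 : γ⁻¹ * (‖x - y‖^2 - ⟪x - y, u - v⟫) ≤ γ⁻¹ * ‖x - y‖^2 :=
        mul_le_mul_of_nonneg_left (by linarith) hγinv.le
      rw [one_div]
      linarith
end

section
/- Let d ≥ 1, let ρ > 0, L_f > 0, L_g > 0, and γ > 0 satisfy γρ < 1 and γL_g ≤ 1/2. Let f : ℝ^d → ℝ be differentiable with ∇f Lipschitz continuous with constant L_f, and let g : ℝ^d → ℝ be ρ-weakly convex and twice continuously differentiable with ‖∇²g(z)‖ ≤ L_g (operator norm) for every z in the image Prox_{γg}(ℝ^d). Define the drift b^γ : ℝ^d → ℝ^d by b^γ(y) = ∇f(y − γ∇g^γ(y)) + ∇g^γ(y). Then b^γ is Lipschitz continuous on ℝ^d with Lipschitz constant 2L_f + 2L_g. -/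
/-!
First-order optimality of the proximal problem gives `∇g (Prox x) = γ⁻¹ (x - Prox x)`, i.e.
`Φ (Prox x) = x` for `Φ = id + γ ∇g`, and the drift becomes `∇f (Prox x) + ∇g (Prox x)`.
Weak convexity makes `∇g + ρ id` monotone, so with `γρ < 1` the map `Φ` is injective; hence
`Prox (Φ z) = z`, `Prox` is onto, and the Hessian bound holds everywhere: `∇g` is `L_g`-Lipschitz.
Then `‖x - y‖ = ‖Φ (Prox x) - Φ (Prox y)‖ ≥ (1 - γ L_g) ‖Prox x - Prox y‖`, so `Prox` is
2-Lipschitz, and the triangle inequality finishes.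
-/

open scoped RealInnerProductSpace

open Set

theorem ConvexOn.le_sub_of_hasFDerivAt {E : Type*} [NormedAddCommGroup E] [NormedSpace ℝ E]
    {h : E → ℝ} {h' : E →L[ℝ] ℝ} {a : E} (hc : ConvexOn ℝ univ h) (hh : HasFDerivAt h h' a)
    (b : E) : h' (b - a) ≤ h b - h a := by
  have hline : ConvexOn ℝ univ (h ∘ AffineMap.lineMap (k := ℝ) a b) := hc.comp_affineMap _
  have hderiv : HasDerivAt (h ∘ AffineMap.lineMap (k := ℝ) a b) (h' (b - a)) 0 := by
    have hh₀ : HasFDerivAt h h' (AffineMap.lineMap a b (0 : ℝ)) := by simpa using hh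
    simpa using hh₀.comp_hasDerivAt (0 : ℝ) AffineMap.hasDerivAt_lineMap
  simpa [slope_def_field] using
    hline.le_slope_of_hasDerivAt (mem_univ 0) (mem_univ 1) zero_lt_one hderiv

section InnerProductSpace

variable {E : Type*} [NormedAddCommGroup E] [InnerProductSpace ℝ E]

theorem neg_mul_norm_sq_le_inner_of_convexOn_add_sq [CompleteSpace E] {g : E → ℝ} {g' : E → E}
    {ρ : ℝ} (hweak : ConvexOn ℝ univ (fun x => g x + ρ / 2 * ‖x‖ ^ 2))
    (hg' : ∀ x, HasGradientAt g (g' x) x) (a b : E) :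
    -(ρ * ‖a - b‖ ^ 2) ≤ ⟪g' a - g' b, a - b⟫ := by
  have hderiv : ∀ x, HasFDerivAt (fun x => g x + ρ / 2 * ‖x‖ ^ 2)
      (InnerProductSpace.toDual ℝ E (g' x) + (ρ / 2) • 2 • innerSL ℝ x) x := fun x =>
    (hg' x).hasFDerivAt.add ((hasStrictFDerivAt_norm_sq x).hasFDerivAt.const_mul (ρ / 2))
  have hab := hweak.le_sub_of_hasFDerivAt (hderiv a) b
  have hba := hweak.le_sub_of_hasFDerivAt (hderiv b) a
  simp only [add_apply, smul_apply, InnerProductSpace.toDual_apply_apply, innerSL_apply_apply,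
    smul_eq_mul, nsmul_eq_mul] at hab hba
  rw [← real_inner_self_eq_norm_sq]
  simp only [inner_sub_left, inner_sub_right, real_inner_comm a b] at hab hba ⊢
  nlinarith

def IsProxPoint (γ : ℝ) (g : E → ℝ) (x p : E) : Prop :=
  ∀ y, 1 / (2 * γ) * ‖x - p‖ ^ 2 + g p ≤ 1 / (2 * γ) * ‖x - y‖ ^ 2 + g y

theorem IsProxPoint.gradient_eq [CompleteSpace E] {γ : ℝ} {g : E → ℝ} {x p v : E}
    (hp : IsProxPoint γ g x p) (hv : HasGradientAt g v p) : v = γ⁻¹ • (x - p) := by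
  have hderiv : HasFDerivAt (fun y => 1 / (2 * γ) * ‖x - y‖ ^ 2 + g y)
      ((1 / (2 * γ)) • (2 • (innerSL ℝ (x - p)).comp (0 - ContinuousLinearMap.id ℝ E))
        + InnerProductSpace.toDual ℝ E v) p :=
    (((hasFDerivAt_const x p).sub (hasFDerivAt_id p)).norm_sq.const_mul _).add hv.hasFDerivAt
  have hmin : IsLocalMin (fun y => 1 / (2 * γ) * ‖x - y‖ ^ 2 + g y) p :=
    Filter.Eventually.of_forall hp
  have hzero := hmin.hasFDerivAt_eq_zero hderiv
  refine ext_inner_right ℝ fun u => ?_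
  have := congr($hzero u)
  simp only [one_div, map_sub, zero_sub, ContinuousLinearMap.comp_neg,
    ContinuousLinearMap.comp_id, neg_sub, add_apply, smul_apply, sub_apply, coe_innerSL_apply,
    nsmul_eq_mul, smul_eq_mul, InnerProductSpace.toDual_apply_apply, zero_apply] at this
  rw [real_inner_smul_left, inner_sub_left]
  linear_combination this

theorem injective_add_smul_of_neg_mul_norm_sq_le_inner {G : E → E} {ρ γ : ℝ}
    (hG : ∀ a b, -(ρ * ‖a - b‖ ^ 2) ≤ ⟪G a - G b, a - b⟫) (hγ : 0 ≤ γ) (hγρ : γ * ρ < 1) :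
    Function.Injective (fun z => z + γ • G z) := by
  intro a b hab
  have hdiff : a - b = γ • (G b - G a) := by
    rw [smul_sub]; linear_combination (norm := module) hab
  have hsq : ‖a - b‖ ^ 2 ≤ γ * ρ * ‖a - b‖ ^ 2 :=
    calc ‖a - b‖ ^ 2 = γ * ⟪G b - G a, a - b⟫ := by
          rw [← real_inner_self_eq_norm_sq, ← real_inner_smul_left, ← hdiff]
      _ = γ * -⟪G a - G b, a - b⟫ := by rw [← inner_neg_left, neg_sub]
      _ ≤ γ * ρ * ‖a - b‖ ^ 2 := by nlinarith [hG a b]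
  have hsq_zero : ‖a - b‖ ^ 2 = 0 := by nlinarith [sq_nonneg ‖a - b‖]
  simpa [sub_eq_zero] using hsq_zero

end InnerProductSpace

theorem norm_sub_le_two_mul_norm_add_smul_sub {E : Type*} [SeminormedAddCommGroup E]
    [NormedSpace ℝ E] {G : E → E} {L γ : ℝ} (hG : ∀ a b, ‖G a - G b‖ ≤ L * ‖a - b‖)
    (hγ : 0 ≤ γ) (hγL : γ * L ≤ 1 / 2) (p q : E) :
    ‖p - q‖ ≤ 2 * ‖(p + γ • G p) - (q + γ • G q)‖ := by
  have hpert : ‖γ • G p - γ • G q‖ ≤ 1 / 2 * ‖p - q‖ :=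
    calc ‖γ • G p - γ • G q‖ = γ * ‖G p - G q‖ := by
          rw [← smul_sub, norm_smul, Real.norm_of_nonneg hγ]
      _ ≤ γ * (L * ‖p - q‖) := mul_le_mul_of_nonneg_left (hG p q) hγ
      _ ≤ 1 / 2 * ‖p - q‖ := by rw [← mul_assoc]; gcongr
  have htri : ‖p - q‖ ≤ ‖(p + γ • G p) - (q + γ • G q)‖ + ‖γ • G p - γ • G q‖ := by
    calc ‖p - q‖ = ‖((p + γ • G p) - (q + γ • G q)) - (γ • G p - γ • G q)‖ := by
          congr 1; abel
      _ ≤ _ := norm_sub_le _ _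
  linarith

theorem psgla_drift_lipschitz_general (d : ℕ) (ρ Lf Lg γ : ℝ)
    (hLf : 0 < Lf) (hLg : 0 < Lg) (hγ : 0 < γ)
    (hγρ : γ * ρ < 1) (hγLg : γ * Lg ≤ 1 / 2)
    (f' : EuclideanSpace ℝ (Fin d) → EuclideanSpace ℝ (Fin d))
    (hf'lip : ∀ x y : EuclideanSpace ℝ (Fin d), ‖f' x - f' y‖ ≤ Lf * ‖x - y‖)
    (g : EuclideanSpace ℝ (Fin d) → ℝ)
    (hweak : ConvexOn ℝ Set.univ (fun x => g x + ρ / 2 * ‖x‖ ^ 2))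
    (g' : EuclideanSpace ℝ (Fin d) → EuclideanSpace ℝ (Fin d))
    (g'' : EuclideanSpace ℝ (Fin d) →
      (EuclideanSpace ℝ (Fin d) →L[ℝ] EuclideanSpace ℝ (Fin d)))
    (hg' : ∀ x, HasGradientAt g (g' x) x)
    (hg'' : ∀ x, HasFDerivAt g' (g'' x) x)
    (prox : EuclideanSpace ℝ (Fin d) → EuclideanSpace ℝ (Fin d))
    (hprox : ∀ x y : EuclideanSpace ℝ (Fin d),
      1 / (2 * γ) * ‖x - prox x‖ ^ 2 + g (prox x)
        ≤ 1 / (2 * γ) * ‖x - y‖ ^ 2 + g y)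
    (hbound : ∀ z ∈ Set.range prox, ‖g'' z‖ ≤ Lg) :
    ∀ x y : EuclideanSpace ℝ (Fin d),
      ‖(f' (x - γ • (γ⁻¹ • (x - prox x))) + γ⁻¹ • (x - prox x))
          - (f' (y - γ • (γ⁻¹ • (y - prox y))) + γ⁻¹ • (y - prox y))‖
        ≤ (2 * Lf + 2 * Lg) * ‖x - y‖ := by
  intro x y
  have hgrad (w) : g' (prox w) = γ⁻¹ • (w - prox w) :=
    IsProxPoint.gradient_eq (hprox w) (hg' (prox w))
  have hright (w) : prox w + γ • g' (prox w) = w := by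
    rw [hgrad, smul_inv_smul₀ hγ.ne']; abel
  have hleft (z) : prox (z + γ • g' z) = z :=
    injective_add_smul_of_neg_mul_norm_sq_le_inner
      (neg_mul_norm_sq_le_inner_of_convexOn_add_sq hweak hg') hγ.le hγρ (hright _)
  have hg'lip (a b) : ‖g' a - g' b‖ ≤ Lg * ‖a - b‖ :=
    convex_univ.norm_image_sub_le_of_norm_hasFDerivWithin_le
      (fun z _ => (hg'' z).hasFDerivWithinAt) (fun z _ => hbound z ⟨_, hleft z⟩)
      (mem_univ b) (mem_univ a)
  have hproxlip : ‖prox x - prox y‖ ≤ 2 * ‖x - y‖ := by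
    simpa only [hright] using
      norm_sub_le_two_mul_norm_add_smul_sub hg'lip hγ.le hγLg (prox x) (prox y)
  have hshift (w) : w - γ • (γ⁻¹ • (w - prox w)) = prox w := by
    rw [smul_inv_smul₀ hγ.ne']; abel
  rw [hshift, hshift, ← hgrad, ← hgrad]
  calc ‖(f' (prox x) + g' (prox x)) - (f' (prox y) + g' (prox y))‖
      ≤ ‖f' (prox x) - f' (prox y)‖ + ‖g' (prox x) - g' (prox y)‖ := by
        rw [add_sub_add_comm]; exact norm_add_le _ _
    _ ≤ (Lf + Lg) * ‖prox x - prox y‖ := by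
        linarith [hf'lip (prox x) (prox y), hg'lip (prox x) (prox y)]
    _ ≤ (Lf + Lg) * (2 * ‖x - y‖) := mul_le_mul_of_nonneg_left hproxlip (by linarith)
    _ = (2 * Lf + 2 * Lg) * ‖x - y‖ := by ring

/-- With `∇f` `L_f`-Lipschitz, and `g` ρ-weakly convex, C², with
`‖∇²g(z)‖ ≤ L_g` on the image of `Prox_{γg}`, `γρ < 1`, `γL_g ≤ 1/2`, the drift
`b^γ(y) = ∇f(y − γ∇g^γ(y)) + ∇g^γ(y)` (with `∇g^γ(y) = (1/γ)(y − Prox_{γg}(y))`)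
is Lipschitz with constant `2L_f + 2L_g`. -/
theorem psgla_drift_lipschitz (d : ℕ) (hd : 1 ≤ d) (ρ Lf Lg γ : ℝ)
    (hρ : 0 < ρ) (hLf : 0 < Lf) (hLg : 0 < Lg) (hγ : 0 < γ)
    (hγρ : γ * ρ < 1) (hγLg : γ * Lg ≤ 1 / 2)
    (f : EuclideanSpace ℝ (Fin d) → ℝ)
    (f' : EuclideanSpace ℝ (Fin d) → EuclideanSpace ℝ (Fin d))
    (hf' : ∀ x, HasGradientAt f (f' x) x)
    (hf'lip : ∀ x y : EuclideanSpace ℝ (Fin d), ‖f' x - f' y‖ ≤ Lf * ‖x - y‖)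
    (g : EuclideanSpace ℝ (Fin d) → ℝ)
    (hweak : ConvexOn ℝ Set.univ (fun x => g x + ρ / 2 * ‖x‖ ^ 2))
    (g' : EuclideanSpace ℝ (Fin d) → EuclideanSpace ℝ (Fin d))
    (g'' : EuclideanSpace ℝ (Fin d) →
      (EuclideanSpace ℝ (Fin d) →L[ℝ] EuclideanSpace ℝ (Fin d)))
    (hg' : ∀ x, HasGradientAt g (g' x) x)
    (hg'' : ∀ x, HasFDerivAt g' (g'' x) x)
    (hg''cont : Continuous g'')
    (prox : EuclideanSpace ℝ (Fin d) → EuclideanSpace ℝ (Fin d))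
    (hprox : ∀ x y : EuclideanSpace ℝ (Fin d),
      1 / (2 * γ) * ‖x - prox x‖ ^ 2 + g (prox x)
        ≤ 1 / (2 * γ) * ‖x - y‖ ^ 2 + g y)
    (hbound : ∀ z ∈ Set.range prox, ‖g'' z‖ ≤ Lg) :
    ∀ x y : EuclideanSpace ℝ (Fin d),
      ‖(f' (x - γ • (γ⁻¹ • (x - prox x))) + γ⁻¹ • (x - prox x))
          - (f' (y - γ • (γ⁻¹ • (y - prox y))) + γ⁻¹ • (y - prox y))‖
        ≤ (2 * Lf + 2 * Lg) * ‖x - y‖ :=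
  psgla_drift_lipschitz_general d ρ Lf Lg γ hLf hLg hγ hγρ hγLg f' hf'lip g hweak g' g'' hg' hg''
    prox hprox hbound
end
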